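/- Let n_1 and n_2 be positive even integers with minimal hyperbinary expansions 𝐧_1 and 𝐧_2, and let n be the nonnegative integer whose hyperbinary expansion is the concatenated word 𝐧_1𝐧_2. Let b_0 (respectively b_2) be the number of hyperbinary expansions of n_1 ending with the digit 0 (respectively with the digit 2), and let s be the number of short hyperbinary expansions of n_2. Then b(n) = b_0·b(n_2) + b_2·s. -/

import Mathlib

/-- The value of a word over the digits `{0,1,2}`, read as a (hyper)binary expansion:
`wordVal (x₀ … x_k) = Σ x_i · 2^(k-i)`. -/
def wordVal : List ℕ → ℕ
  | [] => 0
  | d :: w => d * 2 ^ w.length + wordVal w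

/-- `Hyp n` is the set of hyperbinary expansions of `n`: words over `{0,1,2}` with
nonzero leading digit whose value is `n` (the empty word is the unique expansion of `0`). -/
def Hyp (n : ℕ) : Set (List ℕ) :=
  {w | (∀ d ∈ w, d ≤ 2) ∧ w.head? ≠ some 0 ∧ wordVal w = n}

/-- Single-step reduction of type `→` : `(x02y, x10y)` or `(2y, 10y)`. -/
def StepArrow (a b : List ℕ) : Prop :=
  (∃ x y : List ℕ, a = x ++ 0 :: 2 :: y ∧ b = x ++ 1 :: 0 :: y) ∨
    (∃ y : List ℕ, a = 2 :: y ∧ b = 1 :: 0 :: y)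

/-- Single-step reduction of type `↠` : `(x12y, x20y)`. -/
def StepDouble (a b : List ℕ) : Prop :=
  ∃ x y : List ℕ, a = x ++ 1 :: 2 :: y ∧ b = x ++ 2 :: 0 :: y

/-- A single-step reduction (of either type). -/
def Step (a b : List ℕ) : Prop := StepArrow a b ∨ StepDouble a b

/-- `bFun n` is the number of hyperbinary expansions of `n`. -/
noncomputable def bFun (n : ℕ) : ℕ := (Hyp n).ncard

/-- The set of arcs of the graph `A(n)`: labeled single-step reductions between
hyperbinary expansions of `n`. -/
def arcs (n : ℕ) : Set (List ℕ × List ℕ) :=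
  {p | p.1 ∈ Hyp n ∧ p.2 ∈ Hyp n ∧ Step p.1 p.2}

/-- `aFun n` is the number of arcs of `A(n)`. -/
noncomputable def aFun (n : ℕ) : ℕ := (arcs n).ncard

/-- The cyclomatic number `v(n) = a(n) - b(n) + 1` of the connected graph `A(n)`. -/
noncomputable def vFun (n : ℕ) : ℕ := aFun n + 1 - bFun n

lemma wordVal_append (u v : List ℕ) :
    wordVal (u ++ v) = wordVal u * 2 ^ v.length + wordVal v := by
  induction u with
  | nil => simp [wordVal]
  | cons d t ih =>
    show d * 2 ^ (t ++ v).length + wordVal (t ++ v) = _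
    rw [List.length_append, ih, pow_add]
    show _ = (d * 2 ^ t.length + wordVal t) * 2 ^ v.length + wordVal v
    ring

lemma wordVal_ub (w : List ℕ) (h : ∀ d ∈ w, d ≤ 2) :
    wordVal w + 2 ≤ 2 ^ (w.length + 1) := by
  induction w with
  | nil => simp [wordVal]
  | cons d t ih =>
    have hd : d ≤ 2 := h d (by simp)
    have ht := ih (fun e he => h e (by simp [he]))
    simp only [wordVal, List.length_cons]
    have h1 : d * 2 ^ t.length ≤ 2 * 2 ^ t.length := Nat.mul_le_mul_right _ hd
    have h2 : 2 ^ (t.length + 1 + 1) = 2 * 2 ^ t.length + 2 ^ (t.length + 1) := by ring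
    omega

lemma wordVal_lb (w : List ℕ) (h : ∀ d ∈ w, 1 ≤ d) :
    2 ^ w.length ≤ wordVal w + 1 := by
  induction w with
  | nil => simp [wordVal]
  | cons d t ih =>
    have hd : 1 ≤ d := h d (by simp)
    have ht := ih (fun e he => h e (by simp [he]))
    simp only [wordVal, List.length_cons]
    have h1 : 2 ^ t.length ≤ d * 2 ^ t.length := Nat.le_mul_of_pos_left _ hd
    have h2 : 2 ^ (t.length + 1) = 2 ^ t.length + 2 ^ t.length := by ring
    omega

lemma wordVal_head_lb (d : ℕ) (t : List ℕ) (hd : d ≠ 0) :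
    2 ^ t.length ≤ wordVal (d :: t) := by
  have h1 : 2 ^ t.length ≤ d * 2 ^ t.length := Nat.le_mul_of_pos_left _ (by omega)
  simp only [wordVal]
  omega

lemma hyp_length_le {n : ℕ} {w : List ℕ} (hw : w ∈ Hyp n) : w.length ≤ n + 1 := by
  obtain ⟨hd, hh, hv⟩ := hw
  cases w with
  | nil => simp
  | cons d t =>
    have hd0 : d ≠ 0 := fun h => hh (by simp [h])
    have h1 := wordVal_head_lb d t hd0
    rw [hv] at h1
    have h2 : t.length < 2 ^ t.length := Nat.lt_two_pow_self
    simp only [List.length_cons]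
    omega

lemma hyp_finite (n : ℕ) : (Hyp n).Finite := by
  apply Set.Finite.subset ((List.finite_length_le (Fin 3) (n + 1)).image (List.map Fin.val))
  intro w hw
  refine ⟨w.map (fun d => (⟨d % 3, Nat.mod_lt d (by norm_num)⟩ : Fin 3)), ?_, ?_⟩
  · simpa using hyp_length_le hw
  · rw [List.map_map]
    refine (List.map_congr_left fun d hd => ?_).trans (List.map_id w)
    have h2 : d ≤ 2 := hw.1 d hd
    simp [Function.comp, Nat.mod_eq_of_lt (by omega : d < 3)]

lemma ncard_prod {α β : Type*} (A : Set α) (B : Set β) :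
    (A ×ˢ B).ncard = A.ncard * B.ncard := by
  rw [← Nat.card_coe_set_eq, ← Nat.card_coe_set_eq, ← Nat.card_coe_set_eq,
    Nat.card_congr (Equiv.Set.prod A B), Nat.card_prod]

lemma ncard_image_cat (A B : Set (List ℕ)) (g : List ℕ → List ℕ) (L : ℕ)
    (hg : ∀ v ∈ B, (g v).length = L) (hginj : Set.InjOn g B) :
    ((fun p : List ℕ × List ℕ => p.1 ++ g p.2) '' (A ×ˢ B)).ncard = A.ncard * B.ncard := by
  rw [Set.ncard_image_of_injOn, ncard_prod]
  rintro ⟨u, v⟩ ⟨hu, hv⟩ ⟨u', v'⟩ ⟨hu', hv'⟩ h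
  simp only at h
  obtain ⟨h1, h2⟩ := List.append_inj' h (by rw [hg v hv, hg v' hv'])
  rw [Prod.mk.injEq]
  exact ⟨h1, hginj hv hv' h2⟩

lemma hyp_end_digit (N q e : ℕ) (he : e ≤ 2) (hN : N = 2 * q + e) (h0 : e = 0 → 0 < q) :
    {w ∈ Hyp N | w.getLast? = some e} = (fun u : List ℕ => u ++ [e]) '' Hyp q := by
  ext w
  simp only [Set.mem_setOf_eq, Set.mem_image]
  constructor
  · rintro ⟨⟨hwd, hwh, hwv⟩, hlast⟩
    have hwne : w ≠ [] := by rintro rfl; simp at hlast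
    have hweq : w.dropLast ++ [e] = w :=
      List.dropLast_append_getLast? e (Option.mem_def.2 hlast)
    refine ⟨w.dropLast, ⟨fun d hd => hwd d (List.dropLast_subset w hd), ?_, ?_⟩, hweq⟩
    · rcases eq_or_ne w.dropLast [] with h | h
      · rw [h]; simp
      · have h3 := List.head?_append_of_ne_nil w.dropLast (l₂ := [e]) h
        rw [hweq] at h3
        rw [← h3]
        exact hwh
    · have h4 := wordVal_append w.dropLast [e]
      rw [hweq, hwv] at h4
      have he' : wordVal [e] = e := by simp [wordVal]
      rw [he'] at h4
      simp only [List.length_cons, List.length_nil, pow_one] at h4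
      omega
  · rintro ⟨u, ⟨hud, huh, huv⟩, rfl⟩
    refine ⟨⟨?_, ?_, ?_⟩, List.getLast?_concat (l := u)⟩
    · intro d hd
      rcases List.mem_append.1 hd with h | h
      · exact hud d h
      · simp at h; omega
    · rcases eq_or_ne u [] with rfl | h
      · have hq : q = 0 := by simpa [wordVal] using huv.symm
        have he0 : e ≠ 0 := fun h' => by have := h0 h'; omega
        simpa using he0
      · rw [List.head?_append_of_ne_nil u h]
        exact huh
    · rw [wordVal_append, huv]
      have he' : wordVal [e] = e := by simp [wordVal]
      rw [he']
      simp only [List.length_cons, List.length_nil, pow_one]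
      omega


/-- If `n₁, n₂` are positive even integers with minimal hyperbinary expansions
`w₁, w₂`, and `n` is the number whose hyperbinary expansion is `w₁ ++ w₂`, then
`b(n) = b₀·b(n₂) + b₂·s`, where `b₀` (resp. `b₂`) counts the expansions of `n₁`
ending in `0` (resp. `2`), and `s` counts the short expansions of `n₂`
(those strictly shorter than the binary expansion of `n₂`). -/
theorem b_concat (n₁ n₂ n : ℕ) (h₁pos : 0 < n₁) (h₁even : Even n₁)
    (h₂pos : 0 < n₂) (h₂even : Even n₂)
    (w₁ w₂ : List ℕ) (hw₁ : w₁ ∈ Hyp n₁) (hw₁min : 0 ∉ w₁)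
    (hw₂ : w₂ ∈ Hyp n₂) (hw₂min : 0 ∉ w₂)
    (hcat : w₁ ++ w₂ ∈ Hyp n)
    (b₀ b₂ s : ℕ)
    (hb₀ : b₀ = {w ∈ Hyp n₁ | w.getLast? = some 0}.ncard)
    (hb₂ : b₂ = {w ∈ Hyp n₁ | w.getLast? = some 2}.ncard)
    (hs : s = {w ∈ Hyp n₂ | w.length < Nat.size n₂}.ncard) :
    bFun n = b₀ * bFun n₂ + b₂ * s := by
  classical
  obtain ⟨hw₁d, hw₁h, hw₁v⟩ := hw₁
  obtain ⟨hw₂d, hw₂h, hw₂v⟩ := hw₂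
  obtain ⟨m, hm⟩ := h₁even
  set k := w₂.length with hk
  have hm1 : 1 ≤ m := by omega
  have hApos : 0 < 2 ^ k := Nat.pow_pos (by norm_num)
  have hA1 : 2 ^ (k + 1) = 2 * 2 ^ k := by ring
  -- basic facts about n₂ and k
  have hw₂ne : w₂ ≠ [] := by
    rintro rfl
    simp [wordVal] at hw₂v
    omega
  have hk1 : 1 ≤ k := by
    rw [hk]
    cases w₂ with
    | nil => exact absurd rfl hw₂ne
    | cons d t => simp
  have hub₂ : n₂ + 2 ≤ 2 ^ (k + 1) := by
    have h1 := wordVal_ub w₂ hw₂d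
    rw [hw₂v, ← hk] at h1
    exact h1
  have hlb₂ : 2 ^ k ≤ n₂ := by
    have h1 := wordVal_lb w₂ (fun d hd => by
      have h2 := hw₂d d hd
      have h3 : d ≠ 0 := fun h' => hw₂min (h' ▸ hd)
      omega)
    rw [hw₂v, ← hk] at h1
    obtain ⟨p, hp⟩ := h₂even
    have h4 : 2 ^ k = 2 * 2 ^ (k - 1) := by
      rw [← pow_succ']
      congr 1
      omega
    omega
  have hn : n = m * 2 ^ (k + 1) + n₂ := by
    obtain ⟨-, -, hv⟩ := hcat
    rw [wordVal_append, hw₁v, hw₂v, ← hk] at hv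
    rw [← hv, hm, pow_succ]
    ring
  -- the short and long expansions of n₂
  have hlen₂ : ∀ v ∈ Hyp n₂, v.length = k ∨ v.length = k + 1 := by
    rintro v ⟨hvd, hvh, hvv⟩
    have hub := wordVal_ub v hvd
    rw [hvv] at hub
    have h1 : k ≤ v.length := by
      by_contra hcon
      have h2 : v.length + 1 ≤ k := by omega
      have h3 := Nat.pow_le_pow_right (by norm_num : 1 ≤ 2) h2
      omega
    have h2 : v.length ≤ k + 1 := by
      cases v with
      | nil => simp
      | cons d t =>
        have hd0 : d ≠ 0 := fun h' => hvh (by simp [h'])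
        have h4 := wordVal_head_lb d t hd0
        rw [hvv] at h4
        by_contra hcon
        simp only [List.length_cons] at hcon
        have h5 : k + 1 ≤ t.length := by omega
        have h6 := Nat.pow_le_pow_right (by norm_num : 1 ≤ 2) h5
        omega
    omega
  have short_mem : ∀ v : List ℕ, (∀ d ∈ v, d ≤ 2) → v.length = k → wordVal v = n₂ →
      v ∈ {v ∈ Hyp n₂ | v.length = k} := by
    intro v hvd hvl hvv
    refine ⟨⟨hvd, ?_, hvv⟩, hvl⟩
    cases v with
    | nil => simp
    | cons d t =>
      intro hh
      have hd0 : d = 0 := by simpa using hh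
      subst hd0
      have ht := wordVal_ub t (fun e he => hvd e (by simp [he]))
      have hvt : wordVal t = n₂ := by simpa [wordVal] using hvv
      have hl : t.length + 1 = k := by simpa using hvl
      rw [hl] at ht
      omega
  -- names for the pieces
  set Sh : Set (List ℕ) := {v ∈ Hyp n₂ | v.length = k} with hShdef
  set Lg : Set (List ℕ) := {v ∈ Hyp n₂ | v.length = k + 1} with hLgdef
  set S₁ : Set (List ℕ) :=
    (fun p : List ℕ × List ℕ => p.1 ++ p.2) '' (Hyp m ×ˢ Lg) with hS₁def
  set S₂ : Set (List ℕ) :=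
    (fun p : List ℕ × List ℕ => p.1 ++ (0 :: p.2)) '' (Hyp m ×ˢ Sh) with hS₂def
  set S₃ : Set (List ℕ) :=
    (fun p : List ℕ × List ℕ => p.1 ++ (2 :: p.2)) '' (Hyp (m - 1) ×ˢ Sh) with hS₃def
  -- forward inclusion
  have forward : Hyp n ⊆ (S₁ ∪ S₂) ∪ S₃ := by
    rintro w ⟨hwd, hwh, hwv⟩
    have hLub := wordVal_ub w hwd
    rw [hwv] at hLub
    have hkL : k + 1 ≤ w.length := by
      by_contra hcon
      have h4 : w.length + 1 ≤ k + 1 := by omega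
      have h5 := Nat.pow_le_pow_right (by norm_num : 1 ≤ 2) h4
      have h6 : 2 ^ (k + 1) ≤ m * 2 ^ (k + 1) := Nat.le_mul_of_pos_left _ (by omega)
      omega
    obtain ⟨u, v, hw_eq, hvlen⟩ : ∃ u v : List ℕ, u ++ v = w ∧ v.length = k + 1 :=
      ⟨w.take (w.length - (k + 1)), w.drop (w.length - (k + 1)), List.take_append_drop _ w,
        by rw [List.length_drop]; omega⟩
    subst hw_eq
    have hvd : ∀ d ∈ v, d ≤ 2 := fun d hd => hwd d (List.mem_append.2 (Or.inr hd))
    have hud : ∀ d ∈ u, d ≤ 2 := fun d hd => hwd d (List.mem_append.2 (Or.inl hd))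
    have hval : wordVal u * 2 ^ (k + 1) + wordVal v = m * 2 ^ (k + 1) + n₂ := by
      have h7 := wordVal_append u v
      rw [hvlen, hwv, hn] at h7
      omega
    have hvub : wordVal v + 2 ≤ 2 * 2 ^ (k + 1) := by
      have h8 := wordVal_ub v hvd
      rw [hvlen] at h8
      have h9 : (2 : ℕ) ^ (k + 1 + 1) = 2 * 2 ^ (k + 1) := by ring
      omega
    have key : (wordVal u = m ∧ wordVal v = n₂) ∨
        (wordVal u + 1 = m ∧ wordVal v = n₂ + 2 ^ (k + 1)) := by
      rcases Nat.lt_trichotomy (wordVal u) m with h | h | h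
      · obtain ⟨t, ht⟩ := Nat.exists_eq_add_of_lt h
        rw [ht] at hval
        have hexp : (wordVal u + t + 1) * 2 ^ (k + 1)
            = wordVal u * 2 ^ (k + 1) + t * 2 ^ (k + 1) + 2 ^ (k + 1) := by ring
        rcases Nat.eq_zero_or_pos t with rfl | h'
        · right
          constructor
          · omega
          · omega
        · exfalso
          have h10 : 2 ^ (k + 1) ≤ t * 2 ^ (k + 1) := Nat.le_mul_of_pos_left _ h'
          omega
      · left
        rw [h] at hval
        exact ⟨h, by omega⟩
      · exfalso
        obtain ⟨t, ht⟩ := Nat.exists_eq_add_of_lt h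
        rw [ht] at hval
        have hexp : (m + t + 1) * 2 ^ (k + 1)
            = m * 2 ^ (k + 1) + t * 2 ^ (k + 1) + 2 ^ (k + 1) := by ring
        omega
    rcases key with ⟨hqm, hcv⟩ | ⟨hqm, hcv⟩
    · have hune : u ≠ [] := by
        intro h'
        have h0 : wordVal u = 0 := by rw [h']; rfl
        omega
      have huh : u.head? ≠ some 0 := by
        rw [← List.head?_append_of_ne_nil u (l₂ := v) hune]
        exact hwh
      have humem : u ∈ Hyp m := ⟨hud, huh, hqm⟩
      cases v with
      | nil => simp at hvlen
      | cons d t =>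
        have htd : ∀ e ∈ t, e ≤ 2 := fun e he => hvd e (by simp [he])
        have htlen : t.length = k := by simpa using hvlen
        by_cases hd0 : d = 0
        · subst hd0
          have htv : wordVal t = n₂ := by
            have h12 : wordVal (0 :: t) = wordVal t := by simp [wordVal]
            omega
          have htmem := short_mem t htd htlen htv
          exact Or.inl (Or.inr ⟨(u, t), ⟨humem, htmem⟩, rfl⟩)
        · have hvh : (d :: t).head? ≠ some 0 := by simp [hd0]
          have hvmem : (d :: t) ∈ Lg := ⟨⟨hvd, hvh, hcv⟩, hvlen⟩
          exact Or.inl (Or.inl ⟨(u, d :: t), ⟨humem, hvmem⟩, rfl⟩)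
    · cases v with
      | nil => simp at hvlen
      | cons d t =>
        have htd : ∀ e ∈ t, e ≤ 2 := fun e he => hvd e (by simp [he])
        have htlen : t.length = k := by simpa using hvlen
        have htub := wordVal_ub t htd
        rw [htlen] at htub
        have hdle : d ≤ 2 := hvd d (by simp)
        have hcv' : d * 2 ^ k + wordVal t = n₂ + 2 ^ (k + 1) := by
          have h13 : wordVal (d :: t) = d * 2 ^ t.length + wordVal t := rfl
          rw [htlen] at h13
          omega
        have hd2 : d = 2 := by
          have h14 : d = 0 ∨ d = 1 ∨ d = 2 := by omega
          rcases h14 with rfl | rfl | rfl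
          · simp at hcv'; omega
          · simp at hcv'; omega
          · rfl
        subst hd2
        have htv : wordVal t = n₂ := by
          have h15 : (2 : ℕ) * 2 ^ k = 2 ^ (k + 1) := by ring
          omega
        have htmem := short_mem t htd htlen htv
        have huh : u.head? ≠ some 0 := by
          rcases eq_or_ne u [] with h' | hune
          · rw [h']; simp
          · rw [← List.head?_append_of_ne_nil u (l₂ := 2 :: t) hune]
            exact hwh
        have humem : u ∈ Hyp (m - 1) := ⟨hud, huh, by omega⟩
        exact Or.inr ⟨(u, t), ⟨humem, htmem⟩, rfl⟩
  -- backward inclusions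
  have back₁ : S₁ ⊆ Hyp n := by
    rintro w ⟨⟨u, v⟩, ⟨⟨hud, huh, huv⟩, ⟨⟨hvd, hvh, hvv⟩, hvlen⟩⟩, rfl⟩
    simp only at *
    have hune : u ≠ [] := by
      intro h'
      have h0 : wordVal u = 0 := by rw [h']; rfl
      omega
    refine ⟨?_, ?_, ?_⟩
    · intro d hd
      rcases List.mem_append.1 hd with h | h
      · exact hud d h
      · exact hvd d h
    · rw [List.head?_append_of_ne_nil u hune]
      exact huh
    · rw [wordVal_append, hvlen, huv, hvv, hn]
  have back₂ : S₂ ⊆ Hyp n := by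
    rintro w ⟨⟨u, v⟩, ⟨⟨hud, huh, huv⟩, ⟨⟨hvd, hvh, hvv⟩, hvlen⟩⟩, rfl⟩
    simp only at *
    have hune : u ≠ [] := by
      intro h'
      have h0 : wordVal u = 0 := by rw [h']; rfl
      omega
    refine ⟨?_, ?_, ?_⟩
    · intro d hd
      rcases List.mem_append.1 hd with h | h
      · exact hud d h
      · rcases List.mem_cons.1 h with rfl | h'
        · omega
        · exact hvd d h'
    · rw [List.head?_append_of_ne_nil u hune]
      exact huh
    · rw [wordVal_append]
      have h17 : wordVal (0 :: v) = wordVal v := by simp [wordVal]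
      rw [h17, huv, hvv, hn]
      simp only [List.length_cons, hvlen]
  have back₃ : S₃ ⊆ Hyp n := by
    rintro w ⟨⟨u, v⟩, ⟨⟨hud, huh, huv⟩, ⟨⟨hvd, hvh, hvv⟩, hvlen⟩⟩, rfl⟩
    simp only at *
    refine ⟨?_, ?_, ?_⟩
    · intro d hd
      rcases List.mem_append.1 hd with h | h
      · exact hud d h
      · rcases List.mem_cons.1 h with rfl | h'
        · omega
        · exact hvd d h'
    · rcases eq_or_ne u [] with rfl | hune
      · simp
      · rw [List.head?_append_of_ne_nil u hune]
        exact huh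
    · rw [wordVal_append]
      have h18 : wordVal (2 :: v) = 2 * 2 ^ v.length + wordVal v := rfl
      rw [h18, huv, hvv, hn]
      simp only [List.length_cons, hvlen]
      have h19 : (2 : ℕ) ^ (k + 1) = 2 * 2 ^ k := by ring
      have h20 : (m - 1) * 2 ^ (k + 1) + 2 ^ (k + 1) = m * 2 ^ (k + 1) := by
        have : m - 1 + 1 = m := by omega
        calc (m - 1) * 2 ^ (k + 1) + 2 ^ (k + 1) = (m - 1 + 1) * 2 ^ (k + 1) := by ring
        _ = m * 2 ^ (k + 1) := by rw [this]
      omega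
  have hsplit : Hyp n = (S₁ ∪ S₂) ∪ S₃ :=
    Set.Subset.antisymm forward
      (Set.union_subset (Set.union_subset back₁ back₂) back₃)
  -- disjointness
  have hd₁₂ : Disjoint S₁ S₂ := by
    rw [Set.disjoint_left]
    rintro w ⟨⟨u, v⟩, ⟨hu, hv⟩, rfl⟩ ⟨⟨u', v'⟩, ⟨hu', hv'⟩, heq⟩
    simp only at heq ⊢
    have hl : (0 :: v').length = v.length := by
      simp [hv.2, hv'.2]
    obtain ⟨-, h2⟩ := List.append_inj' heq hl
    rw [← h2] at hv
    exact hv.1.2.1 rfl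
  have hd₁₃ : Disjoint S₁ S₃ := by
    rw [Set.disjoint_left]
    rintro w ⟨⟨u, v⟩, ⟨hu, hv⟩, rfl⟩ ⟨⟨u', v'⟩, ⟨hu', hv'⟩, heq⟩
    simp only at heq ⊢
    have hl : (2 :: v').length = v.length := by
      simp [hv.2, hv'.2]
    obtain ⟨-, h2⟩ := List.append_inj' heq hl
    have h21 : wordVal (2 :: v') = 2 * 2 ^ v'.length + wordVal v' := rfl
    rw [h2] at h21
    rw [hv.1.2.2, hv'.2, hv'.1.2.2] at h21
    omega
  have hd₂₃ : Disjoint S₂ S₃ := by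
    rw [Set.disjoint_left]
    rintro w ⟨⟨u, v⟩, ⟨hu, hv⟩, rfl⟩ ⟨⟨u', v'⟩, ⟨hu', hv'⟩, heq⟩
    simp only at heq ⊢
    have hl : (2 :: v').length = (0 :: v).length := by
      simp [hv.2, hv'.2]
    obtain ⟨-, h2⟩ := List.append_inj' heq hl
    simp at h2
  -- finiteness
  have hfinSh : Sh.Finite := (hyp_finite n₂).subset (fun v hv => hv.1)
  have hfinLg : Lg.Finite := (hyp_finite n₂).subset (fun v hv => hv.1)
  have hfinS₁ : S₁.Finite := (((hyp_finite m).prod hfinLg)).image _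
  have hfinS₂ : S₂.Finite := (((hyp_finite m).prod hfinSh)).image _
  have hfinS₃ : S₃.Finite := (((hyp_finite (m - 1)).prod hfinSh)).image _
  -- counts of the pieces
  have hc₁ : S₁.ncard = (Hyp m).ncard * Lg.ncard := by
    have h22 := ncard_image_cat (Hyp m) Lg id (k + 1) (fun v hv => hv.2) (fun a _ b _ h => h)
    exact h22
  have hc₂ : S₂.ncard = (Hyp m).ncard * Sh.ncard :=
    ncard_image_cat (Hyp m) Sh (fun v => 0 :: v) (k + 1)
      (fun v hv => by simp [hv.2]) (fun a _ b _ h => by simpa using h)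
  have hc₃ : S₃.ncard = (Hyp (m - 1)).ncard * Sh.ncard :=
    ncard_image_cat (Hyp (m - 1)) Sh (fun v => 2 :: v) (k + 1)
      (fun v hv => by simp [hv.2]) (fun a _ b _ h => by simpa using h)
  -- identify b₀, b₂, s
  have hb₀' : b₀ = (Hyp m).ncard := by
    rw [hb₀, hyp_end_digit n₁ m 0 (by norm_num) (by omega) (fun _ => by omega),
      Set.ncard_image_of_injOn (fun a _ b _ h => List.append_inj_left' h rfl)]
  have hb₂' : b₂ = (Hyp (m - 1)).ncard := by
    rw [hb₂, hyp_end_digit n₁ (m - 1) 2 (by norm_num) (by omega) (fun h => by omega),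
      Set.ncard_image_of_injOn (fun a _ b _ h => List.append_inj_left' h rfl)]
  have hsize : Nat.size n₂ = k + 1 :=
    le_antisymm (Nat.size_le.2 (by omega)) (Nat.lt_size.2 hlb₂)
  have hs' : s = Sh.ncard := by
    rw [hs, hShdef]
    congr 1
    ext v
    simp only [Set.mem_setOf_eq, hsize]
    constructor
    · rintro ⟨hv, hlen⟩
      exact ⟨hv, by rcases hlen₂ v hv with h | h <;> omega⟩
    · rintro ⟨hv, hlen⟩
      exact ⟨hv, by omega⟩
  -- split of Hyp n₂
  have hd₂split : Disjoint Sh Lg := by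
    rw [Set.disjoint_left]
    rintro v ⟨-, h1⟩ ⟨-, h2⟩
    omega
  have h2split : Hyp n₂ = Sh ∪ Lg := by
    ext v
    constructor
    · intro hv
      rcases hlen₂ v hv with h | h
      · exact Or.inl ⟨hv, h⟩
      · exact Or.inr ⟨hv, h⟩
    · rintro (⟨hv, -⟩ | ⟨hv, -⟩) <;> exact hv
  have hbn₂ : bFun n₂ = Sh.ncard + Lg.ncard := by
    rw [bFun, h2split, Set.ncard_union_eq hd₂split hfinSh hfinLg]
  -- conclusion
  rw [bFun, hsplit,
    Set.ncard_union_eq (Set.disjoint_union_left.2 ⟨hd₁₃, hd₂₃⟩) (hfinS₁.union hfinS₂) hfinS₃,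
    Set.ncard_union_eq hd₁₂ hfinS₁ hfinS₂, hc₁, hc₂, hc₃, hb₀', hb₂', hs', hbn₂]
  ring
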